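/- Let x, y ∈ ℝ^n be nonzero vectors such that x + y and x - y do not weakly have the same phase. Let {x_i}_{i=1}^{n-1} be vectors spanning the orthogonal complement x^⊥ of x, and let {x_i}_{i=n}^{2n-2} be vectors spanning the orthogonal complement y^⊥ of y. Then {x_i}_{i=1}^{2n-2} spans ℝ^n, satisfies |⟨x+y, x_i⟩| = |⟨x-y, x_i⟩| for all i = 1,…,2n-2, and fails weak phase retrieval in ℝ^n. -/

import Mathlib

open scoped RealInnerProductSpace BigOperators

/-- The sign function: `sgn t = 1` if `t > 0` and `-1` otherwise (the paper only uses
it on nonzero reals). -/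
noncomputable def sgn (t : ℝ) : ℝ := if 0 < t then 1 else -1

/-- Two vectors in `ℝ^n` weakly have the same phase: there is `θ ∈ {1,-1}` with
`sgn (x i) = θ * sgn (y i)` for every coordinate `i` where both entries are nonzero. -/
def WeaklySamePhase {n : ℕ} (x y : EuclideanSpace ℝ (Fin n)) : Prop :=
  ∃ θ : ℝ, (θ = 1 ∨ θ = -1) ∧
    ∀ i : Fin n, x i ≠ 0 → y i ≠ 0 → sgn (x i) = θ * sgn (y i)

/-- A family of vectors does weak phase retrieval in `ℝ^n`. -/
def DoesWeakPhaseRetrieval {n : ℕ} {ι : Type*} (x : ι → EuclideanSpace ℝ (Fin n)) : Prop :=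
  ∀ u v : EuclideanSpace ℝ (Fin n),
    (∀ i, |(⟪u, x i⟫)| = |(⟪v, x i⟫)|) → WeaklySamePhase u v

/-- A family of vectors does phase retrieval in `ℝ^n`. -/
def DoesPhaseRetrieval {n : ℕ} {ι : Type*} (x : ι → EuclideanSpace ℝ (Fin n)) : Prop :=
  ∀ u v : EuclideanSpace ℝ (Fin n),
    (∀ i, |(⟪u, x i⟫)| = |(⟪v, x i⟫)|) → u = v ∨ u = -v

lemma sgn_mul' (a t : ℝ) (ha : a ≠ 0) (ht : t ≠ 0) : sgn (a * t) = sgn a * sgn t := by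
  rcases ha.lt_or_gt with h | h <;> rcases ht.lt_or_gt with h' | h' <;> unfold sgn
  · rw [if_pos (mul_pos_of_neg_of_neg h h'), if_neg h.not_gt, if_neg h'.not_gt]; norm_num
  · rw [if_neg (mul_neg_of_neg_of_pos h h').not_gt, if_neg h.not_gt, if_pos h']; norm_num
  · rw [if_neg (mul_neg_of_pos_of_neg h h').not_gt, if_pos h, if_neg h'.not_gt]; norm_num
  · rw [if_pos (mul_pos h h'), if_pos h, if_pos h']; norm_num

lemma sgn_sq (t : ℝ) : sgn t * sgn t = 1 := by
  unfold sgn; split_ifs <;> norm_num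

/-- If `x, y ≠ 0` and `x + y`, `x - y` do not weakly have the same phase, then gluing a
family spanning `x^⊥` with a family spanning `y^⊥` produces a spanning family of `2n - 2`
vectors whose measurements cannot distinguish `x + y` from `x - y`; in particular it fails
weak phase retrieval. -/
theorem fails_weakPhaseRetrieval_of_orthocomplement_spans {n : ℕ}
    (x y : EuclideanSpace ℝ (Fin n)) (hx : x ≠ 0) (hy : y ≠ 0)
    (hphase : ¬ WeaklySamePhase (x + y) (x - y))
    (u v : Fin (n - 1) → EuclideanSpace ℝ (Fin n))
    (hu : Submodule.span ℝ (Set.range u) = (Submodule.span ℝ {x})ᗮ)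
    (hv : Submodule.span ℝ (Set.range v) = (Submodule.span ℝ {y})ᗮ) :
    Submodule.span ℝ (Set.range (Sum.elim u v)) = ⊤ ∧
    (∀ i, |(⟪x + y, Sum.elim u v i⟫)| = |(⟪x - y, Sum.elim u v i⟫)|) ∧
    ¬ DoesWeakPhaseRetrieval (Sum.elim u v) := by
  -- x and y are not parallel
  have hnp : ∀ c : ℝ, y ≠ c • x := by
    intro c hc
    apply hphase
    rcases eq_or_ne c (-1) with rfl | hc1
    · refine ⟨1, Or.inl rfl, fun i h1 h2 => absurd ?_ h1⟩
      simp [hc, PiLp.add_apply, PiLp.smul_apply]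
    rcases eq_or_ne c 1 with rfl | hc2
    · refine ⟨1, Or.inl rfl, fun i h1 h2 => absurd ?_ h2⟩
      simp [hc, PiLp.sub_apply, PiLp.smul_apply]
    · have hp : (1 : ℝ) + c ≠ 0 := fun h => hc1 (by linarith)
      have hm : (1 : ℝ) - c ≠ 0 := fun h => hc2 (by linarith)
      refine ⟨sgn (1 + c) * sgn (1 - c), ?_, fun i h1 h2 => ?_⟩
      · unfold sgn; split_ifs <;> norm_num
      · have e1 : (x + y) i = (1 + c) * x i := by
          rw [hc]; simp [PiLp.add_apply, PiLp.smul_apply]; ring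
        have e2 : (x - y) i = (1 - c) * x i := by
          rw [hc]; simp [PiLp.sub_apply, PiLp.smul_apply]; ring
        have hxi : x i ≠ 0 := by
          intro h; apply h1; rw [e1, h, mul_zero]
        rw [e1, e2, sgn_mul' _ _ hp hxi, sgn_mul' _ _ hm hxi]
        rw [show sgn (1+c) * sgn (1-c) * (sgn (1-c) * sgn (x i))
            = sgn (1+c) * ((sgn (1-c) * sgn (1-c)) * sgn (x i)) by ring, sgn_sq]
        ring
  -- the intersection of the spans is trivial
  have hinf : Submodule.span ℝ {x} ⊓ Submodule.span ℝ {y} = ⊥ := by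
    rw [eq_bot_iff]
    rintro z ⟨hz1, hz2⟩
    obtain ⟨a, rfl⟩ := Submodule.mem_span_singleton.mp hz1
    obtain ⟨b, hb⟩ := Submodule.mem_span_singleton.mp hz2
    rcases eq_or_ne b 0 with rfl | hb0
    · rw [zero_smul] at hb; simp [← hb]
    · exfalso
      apply hnp (b⁻¹ * a)
      rw [mul_smul, ← hb, inv_smul_smul₀ hb0]
  -- the glued family spans everything
  have hspan : Submodule.span ℝ (Set.range (Sum.elim u v)) = ⊤ := by
    rw [Set.Sum.elim_range, Submodule.span_union, hu, hv]
    have := Submodule.inf_orthogonal ((Submodule.span ℝ {x})ᗮ) ((Submodule.span ℝ {y})ᗮ)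
    rw [Submodule.orthogonal_orthogonal, Submodule.orthogonal_orthogonal, hinf] at this
    calc (Submodule.span ℝ {x})ᗮ ⊔ (Submodule.span ℝ {y})ᗮ
        = ((Submodule.span ℝ {x})ᗮ ⊔ (Submodule.span ℝ {y})ᗮ)ᗮᗮ :=
          (Submodule.orthogonal_orthogonal _).symm
      _ = (⊥ : Submodule ℝ (EuclideanSpace ℝ (Fin n)))ᗮ := by rw [this]
      _ = ⊤ := Submodule.bot_orthogonal_eq_top
  -- the measurements agree
  have hmeas : ∀ i, |(⟪x + y, Sum.elim u v i⟫)| = |(⟪x - y, Sum.elim u v i⟫)| := by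
    rintro (i | i)
    · have hmem : u i ∈ (Submodule.span ℝ {x})ᗮ := by
        rw [← hu]; exact Submodule.subset_span (Set.mem_range_self i)
      have hxu : ⟪x, u i⟫ = 0 :=
        Submodule.inner_right_of_mem_orthogonal (Submodule.mem_span_singleton_self x) hmem
      simp only [Sum.elim_inl, inner_add_left, inner_sub_left, hxu, zero_add, zero_sub, abs_neg]
    · have hmem : v i ∈ (Submodule.span ℝ {y})ᗮ := by
        rw [← hv]; exact Submodule.subset_span (Set.mem_range_self i)
      have hyv : ⟪y, v i⟫ = 0 :=
        Submodule.inner_right_of_mem_orthogonal (Submodule.mem_span_singleton_self y) hmem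
      simp only [Sum.elim_inr, inner_add_left, inner_sub_left, hyv, add_zero, sub_zero]
  exact ⟨hspan, hmeas, fun h => hphase (h (x + y) (x - y) hmeas)⟩
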